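/- arXiv:1411.2700 — 4 statements merged into one kernel-verified Lean document; each statement's English description precedes it below -/
import Mathlib

section
/- Fix ρ ∈ (0,1/2). There exist constants C > 0 and h₀ ∈ (0,1) such that for all h ∈ (0,h₀) and all β ∈ ℝ with |β|h^{1/2−ρ} < 1/3 and |β|h^{ρ} < 1/3: |λ₁(H_{β,h}) − (−1 − βh^{1/2})| ≤ C·(β²h + exp(−h^{−ρ})). -/
open MeasureTheory Real Set

noncomputable section

/-- The bottom of the weighted 1D Robin–Dirichlet operator `H_{β,h}` on `(0, h^{-ρ})`,
defined variationally as the infimum of the weighted Rayleigh quotient over nonzero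
members of `V_h = {u ∈ C¹([0,h^{-ρ}]) : u(h^{-ρ}) = 0}`. -/
def lamBetaOne (ρ h β : ℝ) : ℝ :=
  sInf { r : ℝ | ∃ u : ℝ → ℝ,
    ContDiffOn ℝ 1 u (Set.Icc 0 (h ^ (-ρ))) ∧ u (h ^ (-ρ)) = 0 ∧
    (∃ τ ∈ Set.Icc (0 : ℝ) (h ^ (-ρ)), u τ ≠ 0) ∧
    r = ((∫ τ in (0 : ℝ)..(h ^ (-ρ)), (derivWithin u (Set.Icc 0 (h ^ (-ρ))) τ) ^ 2 *
            (1 - β * h ^ ((1 : ℝ) / 2) * τ)) - (u 0) ^ 2) /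
        ∫ τ in (0 : ℝ)..(h ^ (-ρ)), (u τ) ^ 2 * (1 - β * h ^ ((1 : ℝ) / 2) * τ) }

/-! Write `L = h^{-ρ}`, `b = β h^{1/2}` and `w(τ) = 1 - bτ`; the hypotheses give `|bτ| ≤ 1/3`
on `[0, L]`. For every `φ`, integrating `(φ u²)'` against the Dirichlet condition `u(L) = 0`
gives `∫ w u'² - φ(0) u(0)² = ∫ (w u'² + 2 φ u u' + φ' u²)`. The integrand is at least
`-c w u²` as soon as `φ² ≤ w (c w + φ')`, and `φ = 1 - (b + b²/2) τ` solves this Riccati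
inequality with `c = 1 + b + 2b²`: this is the lower bound. With `φ = w` the same identity reads
`∫ w (u' + u)² - ∫ (w - w') u²` where `w - w' ≥ (1 + b) w`, and the trial state
`e^{-τ} - e^{-L}` makes `u' + u = -e^{-L}` constant, which gives the upper bound. -/

section IntegrationByParts

variable {L : ℝ} {u u' φ φ' w : ℝ → ℝ}

theorem integral_deriv_mul_sq_of_right_eq_zero (hL : 0 ≤ L)
    (hu : ∀ x ∈ Icc 0 L, HasDerivWithinAt u (u' x) (Icc 0 L) x) (hu' : ContinuousOn u' (Icc 0 L))
    (hφ : ∀ x ∈ Icc 0 L, HasDerivWithinAt φ (φ' x) (Icc 0 L) x) (hφ' : ContinuousOn φ' (Icc 0 L))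
    (huL : u L = 0) :
    ∫ x in 0..L, (φ' x * u x ^ 2 + 2 * φ x * u x * u' x) = -(φ 0 * u 0 ^ 2) := by
  have hderiv : ∀ x ∈ Icc 0 L, HasDerivWithinAt (fun x => φ x * u x ^ 2)
      (φ' x * u x ^ 2 + 2 * φ x * u x * u' x) (Icc 0 L) x := fun x hx =>
    ((hφ x hx).mul ((hu x hx).fun_pow 2)).congr_deriv (by push_cast; ring)
  have hucont : ContinuousOn u (Icc 0 L) := fun x hx => (hu x hx).continuousWithinAt
  have hφcont : ContinuousOn φ (Icc 0 L) := fun x hx => (hφ x hx).continuousWithinAt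
  rw [intervalIntegral.integral_eq_sub_of_hasDeriv_right_of_le hL
    (fun x hx => (hderiv x hx).continuousWithinAt)
    (fun x hx => (hderiv x (Ioo_subset_Icc_self hx)).mono_of_mem_nhdsWithin
      (Icc_mem_nhdsGT_of_mem ⟨hx.1.le, hx.2⟩))
    (ContinuousOn.intervalIntegrable_of_Icc hL (by fun_prop)), huL]
  ring

theorem neg_mul_integral_le_of_riccati (c : ℝ) (hL : 0 ≤ L)
    (hu : ∀ x ∈ Icc 0 L, HasDerivWithinAt u (u' x) (Icc 0 L) x) (hu' : ContinuousOn u' (Icc 0 L))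
    (hφ : ∀ x ∈ Icc 0 L, HasDerivWithinAt φ (φ' x) (Icc 0 L) x) (hφ' : ContinuousOn φ' (Icc 0 L))
    (hw : ContinuousOn w (Icc 0 L)) (huL : u L = 0) (hw_pos : ∀ x ∈ Icc 0 L, 0 < w x)
    (hriccati : ∀ x ∈ Icc 0 L, φ x ^ 2 ≤ w x * (c * w x + φ' x)) :
    -c * ∫ x in 0..L, u x ^ 2 * w x ≤ (∫ x in 0..L, u' x ^ 2 * w x) - φ 0 * u 0 ^ 2 := by
  have hucont : ContinuousOn u (Icc 0 L) := fun x hx => (hu x hx).continuousWithinAt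
  have hφcont : ContinuousOn φ (Icc 0 L) := fun x hx => (hφ x hx).continuousWithinAt
  have hpoint : ∀ x ∈ Icc 0 L,
      0 ≤ u' x ^ 2 * w x + (φ' x * u x ^ 2 + 2 * φ x * u x * u' x) + c * (u x ^ 2 * w x) := by
    intro x hx
    refine (mul_nonneg_iff_of_pos_left (hw_pos x hx)).1 ?_
    nlinarith [sq_nonneg (w x * u' x + φ x * u x),
      mul_nonneg (sub_nonneg.2 (hriccati x hx)) (sq_nonneg (u x))]
  have hnonneg := intervalIntegral.integral_nonneg (μ := volume) hL hpoint
  rw [intervalIntegral.integral_add, intervalIntegral.integral_add,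
    intervalIntegral.integral_const_mul,
    integral_deriv_mul_sq_of_right_eq_zero hL hu hu' hφ hφ' huL] at hnonneg
  · linarith
  all_goals exact ContinuousOn.intervalIntegrable_of_Icc hL (by fun_prop)

theorem integral_sq_deriv_mul_affine_sub_le (b : ℝ) (hL : 0 ≤ L)
    (hu : ∀ x ∈ Icc 0 L, HasDerivWithinAt u (u' x) (Icc 0 L) x) (hu' : ContinuousOn u' (Icc 0 L))
    (huL : u L = 0) :
    (∫ x in 0..L, u' x ^ 2 * (1 - b * x)) - u 0 ^ 2 ≤
      (∫ x in 0..L, (u' x + u x) ^ 2 * (1 - b * x)) -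
        (1 + b) * ∫ x in 0..L, u x ^ 2 * (1 - b * x) := by
  have hucont : ContinuousOn u (Icc 0 L) := fun x hx => (hu x hx).continuousWithinAt
  have hφ : ∀ x ∈ Icc 0 L, HasDerivWithinAt (fun x => 1 - b * x) (-b) (Icc 0 L) x := fun x _ =>
    (((hasDerivAt_id x).const_mul b).const_sub 1).hasDerivWithinAt.congr_deriv (by simp)
  have hpoint : ∀ x ∈ Icc 0 L,
      u' x ^ 2 * (1 - b * x) + (-b * u x ^ 2 + 2 * (1 - b * x) * u x * u' x)
        + (1 + b) * (u x ^ 2 * (1 - b * x)) ≤ (u' x + u x) ^ 2 * (1 - b * x) := by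
    intro x hx
    nlinarith [mul_nonneg (mul_nonneg (sq_nonneg b) hx.1) (sq_nonneg (u x))]
  have hmono := intervalIntegral.integral_mono_on (μ := volume) hL
    (ContinuousOn.intervalIntegrable_of_Icc hL (by fun_prop))
    (ContinuousOn.intervalIntegrable_of_Icc hL (by fun_prop)) hpoint
  rw [intervalIntegral.integral_add, intervalIntegral.integral_add,
    intervalIntegral.integral_const_mul,
    integral_deriv_mul_sq_of_right_eq_zero hL hu hu' hφ continuousOn_const huL] at hmono
  · simp only [mul_zero, sub_zero, one_mul] at hmono
    linarith
  all_goals exact ContinuousOn.intervalIntegrable_of_Icc hL (by fun_prop)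

end IntegrationByParts

def weightedRayleigh (L b : ℝ) (u : ℝ → ℝ) : ℝ :=
  ((∫ τ in (0 : ℝ)..L, derivWithin u (Icc 0 L) τ ^ 2 * (1 - b * τ)) - u 0 ^ 2) /
    ∫ τ in (0 : ℝ)..L, u τ ^ 2 * (1 - b * τ)

def rayleighValues (L b : ℝ) : Set ℝ :=
  {r | ∃ u : ℝ → ℝ, ContDiffOn ℝ 1 u (Icc 0 L) ∧ u L = 0 ∧ (∃ τ ∈ Icc 0 L, u τ ≠ 0) ∧
    r = weightedRayleigh L b u}

theorem lamBetaOne_eq_sInf_rayleighValues (ρ h β : ℝ) :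
    lamBetaOne ρ h β = sInf (rayleighValues (h ^ (-ρ)) (β * h ^ ((1 : ℝ) / 2))) :=
  rfl

def trialState (L : ℝ) (x : ℝ) : ℝ :=
  exp (-x) - exp (-L)

theorem hasDerivAt_trialState (L x : ℝ) : HasDerivAt (trialState L) (-exp (-x)) x :=
  ((hasDerivAt_neg x).exp.sub_const _).congr_deriv (by ring)

theorem exp_neg_mul_one_add_le_one (L : ℝ) : exp (-L) * (1 + L) ≤ 1 :=
  calc exp (-L) * (1 + L) ≤ exp (-L) * exp L := by gcongr; linarith [add_one_le_exp L]
    _ = 1 := by rw [← exp_add, neg_add_cancel, exp_zero]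

section RayleighQuotient

variable {L b : ℝ}

theorem one_sub_mul_mem_Icc (hbL : |b| * L ≤ 1 / 3) {x : ℝ} (hx : x ∈ Icc 0 L) :
    1 - b * x ∈ Icc (2 / 3) (4 / 3) := by
  have : |b * x| ≤ 1 / 3 := by
    rw [abs_mul, abs_of_nonneg hx.1]
    exact (mul_le_mul_of_nonneg_left hx.2 (abs_nonneg b)).trans hbL
  constructor <;> linarith [abs_le.1 this]

theorem neg_le_weightedRayleigh (hL : 0 < L) (hbL : |b| * L ≤ 1 / 3) {u : ℝ → ℝ}
    (hu : ContDiffOn ℝ 1 u (Icc 0 L)) (huL : u L = 0) :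
    -(1 + b + 2 * b ^ 2) ≤ weightedRayleigh L b u := by
  have hw := fun x (hx : x ∈ Icc 0 L) => one_sub_mul_mem_Icc hbL hx
  have hφ : ∀ x ∈ Icc 0 L, HasDerivWithinAt (fun x => 1 - (b + b ^ 2 / 2) * x)
      (-(b + b ^ 2 / 2)) (Icc 0 L) x := fun x _ =>
    (((hasDerivAt_id x).const_mul _).const_sub 1).hasDerivWithinAt.congr_deriv (by simp)
  have hriccati : ∀ x ∈ Icc 0 L, (1 - (b + b ^ 2 / 2) * x) ^ 2 ≤
      (1 - b * x) * ((1 + b + 2 * b ^ 2) * (1 - b * x) + -(b + b ^ 2 / 2)) := by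
    intro x hx
    have hgap : (1 - b * x) * ((1 + b + 2 * b ^ 2) * (1 - b * x) + -(b + b ^ 2 / 2))
        - (1 - (b + b ^ 2 / 2) * x) ^ 2
        = b ^ 2 * ((1 - b * x) * (3 / 2 - 2 * (b * x)) - (b * x) ^ 2 / 4) := by ring
    obtain ⟨hw₁, hw₂⟩ := hw x hx
    nlinarith [mul_nonneg (sq_nonneg b) (sq_nonneg (b * x))]
  have hquad := neg_mul_integral_le_of_riccati (1 + b + 2 * b ^ 2) hL.le
    (fun x hx => (hu.differentiableOn one_ne_zero x hx).hasDerivWithinAt)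
    (hu.continuousOn_derivWithin (uniqueDiffOn_Icc hL) le_rfl) hφ continuousOn_const
    (by fun_prop) huL (fun x hx => by linarith [(hw x hx).1]) hriccati
  simp only [mul_zero, sub_zero] at hquad
  have hD : 0 ≤ ∫ x in 0..L, u x ^ 2 * (1 - b * x) := intervalIntegral.integral_nonneg hL.le
    fun x hx => mul_nonneg (sq_nonneg _) (by linarith [(hw x hx).1])
  rcases hD.eq_or_lt with hD0 | hDpos
  · rw [weightedRayleigh, ← hD0, div_zero]
    nlinarith [sq_nonneg (b + 1 / 4)]
  · rw [weightedRayleigh, le_div_iff₀ hDpos]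
    linarith

theorem le_integral_trialState_sq_mul (hL : 2 ≤ L) (hbL : |b| * L ≤ 1 / 3) :
    4 / 81 ≤ ∫ x in 0..L, trialState L x ^ 2 * (1 - b * x) := by
  set a := exp (-L)
  have hL0 : (0 : ℝ) ≤ L := by linarith
  have ha : 0 < a := exp_pos _
  have haL := exp_neg_mul_one_add_le_one L
  have hftc := integral_deriv_mul_sq_of_right_eq_zero hL0
    (fun x _ => (hasDerivAt_trialState L x).hasDerivWithinAt) (by fun_prop)
    (fun x _ => hasDerivWithinAt_const x _ (1 : ℝ)) continuousOn_const (sub_self a)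
  -- With `u = trialState L`: `(1 - a)² = ∫ 2 u (u + a) ≤ (9/2) ∫ u² (1 - b x) + a² L`,
  -- and `a² L ≤ a (1 - a)`.
  have hmono : ∫ x in 0..L, -(9 / 2 * (trialState L x ^ 2 * (1 - b * x)) + a ^ 2) ≤
      ∫ x in 0..L, (0 * trialState L x ^ 2 + 2 * 1 * trialState L x * -exp (-x)) := by
    refine intervalIntegral.integral_mono_on hL0
      (ContinuousOn.intervalIntegrable_of_Icc hL0 (by unfold trialState; fun_prop))
      (ContinuousOn.intervalIntegrable_of_Icc hL0 (by unfold trialState; fun_prop))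
      fun x hx => ?_
    have hw := (one_sub_mul_mem_Icc hbL hx).1
    have : exp (-x) = trialState L x + a := by rw [trialState]; ring
    rw [this]
    nlinarith [sq_nonneg (trialState L x - a),
      mul_nonneg (sq_nonneg (trialState L x)) (sub_nonneg.2 hw)]
  rw [hftc, intervalIntegral.integral_neg, intervalIntegral.integral_add
    (ContinuousOn.intervalIntegrable_of_Icc hL0 (by unfold trialState; fun_prop))
    intervalIntegrable_const, intervalIntegral.integral_const_mul, intervalIntegral.integral_const,
    smul_eq_mul, sub_zero, trialState, neg_zero, exp_zero] at hmono
  have ha3 : a ≤ 1 / 3 := by nlinarith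
  nlinarith [mul_le_mul_of_nonneg_left haL ha.le, mul_nonneg (sub_nonneg.2 ha3) ha.le]

theorem weightedRayleigh_trialState_le (hL : 2 ≤ L) (hbL : |b| * L ≤ 1 / 3) :
    weightedRayleigh L b (trialState L) ≤ -(1 + b) + 27 * exp (-L) := by
  set a := exp (-L)
  have hL0 : (0 : ℝ) ≤ L := by linarith
  have hder : ∀ x ∈ Icc 0 L, HasDerivWithinAt (trialState L) (-exp (-x)) (Icc 0 L) x :=
    fun x _ => (hasDerivAt_trialState L x).hasDerivWithinAt
  have hN : ∫ x in 0..L, derivWithin (trialState L) (Icc 0 L) x ^ 2 * (1 - b * x) =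
      ∫ x in 0..L, (-exp (-x)) ^ 2 * (1 - b * x) := by
    refine intervalIntegral.integral_congr fun x hx => ?_
    rw [uIcc_of_le hL0] at hx
    simp only [(hder x hx).derivWithin (uniqueDiffOn_Icc (by linarith) x hx)]
  have hmono : ∫ x in 0..L, (-exp (-x) + trialState L x) ^ 2 * (1 - b * x) ≤
      ∫ _ in 0..L, 4 / 3 * a ^ 2 := by
    refine intervalIntegral.integral_mono_on hL0
      (ContinuousOn.intervalIntegrable_of_Icc hL0 (by unfold trialState; fun_prop))
      intervalIntegrable_const fun x hx => ?_
    have : (-exp (-x) + trialState L x) ^ 2 = a ^ 2 := by rw [trialState]; ring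
    rw [this]
    nlinarith [(one_sub_mul_mem_Icc hbL hx).2, sq_nonneg a]
  rw [intervalIntegral.integral_const, smul_eq_mul, sub_zero] at hmono
  have hnum := integral_sq_deriv_mul_affine_sub_le b hL0 hder (by fun_prop) (sub_self a)
  have hden := le_integral_trialState_sq_mul hL hbL
  have haL := exp_neg_mul_one_add_le_one L
  rw [weightedRayleigh, hN, div_le_iff₀ (by linarith)]
  nlinarith [exp_pos (-L)]

end RayleighQuotient

theorem abs_sInf_rayleighValues_sub_le {L b : ℝ} (hL : 2 ≤ L) (hbL : |b| * L ≤ 1 / 3) :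
    |sInf (rayleighValues L b) - (-1 - b)| ≤ 27 * (b ^ 2 + exp (-L)) := by
  have htrial : weightedRayleigh L b (trialState L) ∈ rayleighValues L b := by
    refine ⟨trialState L, by unfold trialState; fun_prop, sub_self _,
      ⟨0, ⟨le_rfl, by linarith⟩, ?_⟩, rfl⟩
    rw [trialState, neg_zero, exp_zero, ne_eq, sub_eq_zero]
    exact (exp_lt_one_iff.2 (by linarith)).ne'
  have hlow : ∀ r ∈ rayleighValues L b, -(1 + b + 2 * b ^ 2) ≤ r := by
    rintro r ⟨u, hu, huL, -, rfl⟩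
    exact neg_le_weightedRayleigh (by linarith) hbL hu huL
  have hge := le_csInf ⟨_, htrial⟩ hlow
  have hle := (csInf_le ⟨_, hlow⟩ htrial).trans (weightedRayleigh_trialState_le hL hbL)
  rw [abs_le]
  constructor <;> linarith [exp_pos (-L), sq_nonneg b]

theorem weighted_ground_state_expansion (ρ : ℝ) (hρ : ρ ∈ Set.Ioo (0 : ℝ) (1 / 2)) :
    ∃ C > (0 : ℝ), ∃ h₀ ∈ Set.Ioo (0 : ℝ) 1, ∀ h ∈ Set.Ioo (0 : ℝ) h₀, ∀ β : ℝ,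
      |β| * h ^ ((1 : ℝ) / 2 - ρ) < 1 / 3 → |β| * h ^ ρ < 1 / 3 →
        |lamBetaOne ρ h β - (-1 - β * h ^ ((1 : ℝ) / 2))| ≤
          C * (β ^ 2 * h + Real.exp (-h ^ (-ρ))) := by
  refine ⟨27, by norm_num, (1 / 2) ^ ρ⁻¹,
    ⟨by positivity, rpow_lt_one (by norm_num) (by norm_num) (inv_pos.2 hρ.1)⟩, ?_⟩
  rintro h ⟨hh, hh₀⟩ β hβ -
  have hL : 2 ≤ h ^ (-ρ) := by
    have : h ^ ρ < 1 / 2 := (lt_rpow_inv_iff_of_pos hh.le (by norm_num) hρ.1).1 hh₀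
    rw [rpow_neg hh.le, le_inv_comm₀ (by norm_num) (rpow_pos_of_pos hh ρ)]
    linarith
  have hbL : |β * h ^ ((1 : ℝ) / 2)| * h ^ (-ρ) ≤ 1 / 3 := by
    rw [abs_mul, abs_of_pos (rpow_pos_of_pos hh _), mul_assoc, ← rpow_add hh, ← sub_eq_add_neg]
    exact hβ.le
  have hb2 : (β * h ^ ((1 : ℝ) / 2)) ^ 2 = β ^ 2 * h := by
    rw [mul_pow, ← rpow_mul_natCast hh.le]
    norm_num
  rw [lamBetaOne_eq_sInf_rayleighValues, ← hb2]
  exact abs_sInf_rayleighValues_sub_le hL hbL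
end
end

section
/- Let κ : ℝ → ℝ be a C^∞ function with κ''(0) < 0 and suppose there is δ > 0 such that κ(s) < κ(0) for all s ∈ (−δ,δ)\{0}. Then there exist δ' ∈ (0,δ] and a C^∞ function ϑ : (−δ',δ') → ℝ such that ϑ(0) = 0, ϑ'(0) = 0, ϑ'(s)² = κ(0) − κ(s) for all |s| < δ', s·ϑ'(s) > 0 for all s ∈ (−δ',δ')\{0}, and ϑ''(0) = √(−κ''(0)/2). -/
/-!
By Hadamard's lemma, `κ 0 - κ s = s ^ 2 * g s` with `g s = -∫₀¹ (1 - t) κ''(t s) dt`,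
which is smooth by differentiation under the integral sign, and `g 0 = -κ''(0) / 2 > 0`.
The strict maximum makes `g` positive on all of `(-δ, δ)`, so `s ↦ s * √(g s)` is a smooth
square root of `κ 0 - κ s` with the sign of `s` there, and `ϑ` is its primitive vanishing at `0`.
-/

open Real Set

open scoped ContDiff

noncomputable section

def rayIntegral (w f : ℝ → ℝ) (s : ℝ) : ℝ :=
  ∫ t in (0:ℝ)..1, w t * f (t * s)

theorem rayIntegral_apply_zero (w f : ℝ → ℝ) :
    rayIntegral w f 0 = (∫ t in (0:ℝ)..1, w t) * f 0 := by
  simp [rayIntegral, intervalIntegral.integral_mul_const]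

theorem continuous_rayIntegral {w f : ℝ → ℝ} (hw : Continuous w) (hf : Continuous f) :
    Continuous (rayIntegral w f) :=
  intervalIntegral.continuous_parametric_intervalIntegral_of_continuous'
    (f := fun s t => w t * f (t * s)) (by fun_prop) 0 1

theorem hasDerivAt_rayIntegral {w f : ℝ → ℝ} (hw : Continuous w) (hf : ContDiff ℝ 1 f)
    (s₀ : ℝ) :
    HasDerivAt (rayIntegral w f) (rayIntegral (fun t => w t * t) (deriv f) s₀) s₀ := by
  obtain ⟨C, hC⟩ := (isCompact_Icc (a := -(|s₀| + 1)) (b := |s₀| + 1)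
    ).exists_bound_of_continuousOn (hf.continuous_deriv le_rfl).continuousOn
  refine (intervalIntegral.hasDerivAt_integral_of_dominated_loc_of_deriv_le
    (F := fun s t => w t * f (t * s)) (F' := fun s t => w t * t * deriv f (t * s))
    (bound := fun t => |w t| * C) (Metric.ball_mem_nhds s₀ one_pos)
    (Filter.Eventually.of_forall fun s => by fun_prop)
    ((by fun_prop : Continuous _).intervalIntegrable 0 1) (by fun_prop) ?_
    ((by fun_prop : Continuous _).intervalIntegrable 0 1) ?_).2
  · refine Filter.Eventually.of_forall fun t ht s hs => ?_
    rw [uIoc_of_le zero_le_one] at ht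
    have hs : |s| ≤ |s₀| + 1 := by
      have := abs_sub_abs_le_abs_sub s s₀
      rw [Metric.mem_ball, Real.dist_eq] at hs
      linarith
    have hts : t * s ∈ Icc (-(|s₀| + 1)) (|s₀| + 1) := by
      rw [mem_Icc, ← abs_le, abs_mul, abs_of_pos ht.1]
      nlinarith [abs_nonneg s, ht.2]
    have ht' : |t| ≤ 1 := by rw [abs_of_pos ht.1]; exact ht.2
    calc ‖w t * t * deriv f (t * s)‖ = |w t| * (|t| * ‖deriv f (t * s)‖) := by
          simp only [norm_mul, Real.norm_eq_abs]; ring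
      _ ≤ |w t| * (1 * C) := by gcongr; exact hC _ hts
      _ = |w t| * C := by ring
  · refine Filter.Eventually.of_forall fun t _ s _ => ?_
    have := (((hf.differentiable one_ne_zero) (t * s)).hasDerivAt.comp s
      ((hasDerivAt_id s).const_mul t)).const_mul (w t)
    exact this.congr_deriv (by simp; ring)

theorem deriv_rayIntegral {w f : ℝ → ℝ} (hw : Continuous w) (hf : ContDiff ℝ 1 f) :
    deriv (rayIntegral w f) = rayIntegral (fun t => w t * t) (deriv f) :=
  funext fun s => (hasDerivAt_rayIntegral hw hf s).deriv

theorem contDiff_rayIntegral {w f : ℝ → ℝ} {n : ℕ∞} (hw : Continuous w)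
    (hf : ContDiff ℝ n f) : ContDiff ℝ n (rayIntegral w f) := by
  induction n using ENat.nat_induction generalizing w f with
  | zero => exact contDiff_zero.mpr (continuous_rayIntegral hw hf.continuous)
  | succ m ih =>
    have hf1 : ContDiff ℝ 1 f := hf.of_le (by exact_mod_cast m.succ_pos)
    rw [show ((m.succ : ℕ∞) : WithTop ℕ∞) = (m : ℕ∞) + 1 by norm_cast] at hf ⊢
    refine contDiff_succ_iff_deriv.mpr
      ⟨fun s => (hasDerivAt_rayIntegral hw hf1 s).differentiableAt, by simp, ?_⟩
    rw [deriv_rayIntegral hw hf1]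
    exact ih (by fun_prop) (contDiff_succ_iff_deriv.mp hf).2.2
  | top ih =>
    exact contDiff_infty.mpr fun m => ih m hw (hf.of_le (WithTop.coe_le_coe.mpr le_top))

theorem taylor_rayIntegral {f : ℝ → ℝ} (hf : ContDiff ℝ 2 f) (s : ℝ) :
    f s = f 0 + s * deriv f 0 + s ^ 2 * rayIntegral (fun t => 1 - t) (deriv (deriv f)) s := by
  have h := map_add_eq_sum_add_integral_iteratedFDeriv (n := 1) (x := (0:ℝ)) (y := s)
    fun _ _ => hf.contDiffAt
  rw [rayIntegral, ← intervalIntegral.integral_const_mul]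
  simpa [iteratedFDeriv_apply_eq_iteratedDeriv_mul_prod, Finset.sum_range_succ, iteratedDeriv_succ,
    mul_left_comm] using h

theorem exists_contDiff_eq_add_sq_mul {f : ℝ → ℝ} (hf : ContDiff ℝ ∞ f)
    (hf0 : deriv f 0 = 0) :
    ∃ g : ℝ → ℝ, ContDiff ℝ ∞ g ∧ g 0 = deriv (deriv f) 0 / 2 ∧
      ∀ s, f s = f 0 + s ^ 2 * g s := by
  refine ⟨rayIntegral (fun t => 1 - t) (deriv (deriv f)),
    contDiff_rayIntegral (n := ⊤) (by fun_prop) (hf.iterate_deriv 2), ?_, fun s => ?_⟩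
  · rw [rayIntegral_apply_zero, intervalIntegral.integral_sub intervalIntegrable_const
      intervalIntegral.intervalIntegrable_id]
    norm_num [integral_id]
    ring
  · simpa [hf0] using taylor_rayIntegral (hf.of_le ENat.LEInfty.out) s

def eikonalPhase (g : ℝ → ℝ) (s : ℝ) : ℝ :=
  ∫ u in (0:ℝ)..s, u * √(g u)

@[simp]
theorem eikonalPhase_zero (g : ℝ → ℝ) : eikonalPhase g 0 = 0 := by
  simp [eikonalPhase]

theorem hasDerivAt_eikonalPhase {g : ℝ → ℝ} (hg : Continuous g) (s : ℝ) :
    HasDerivAt (eikonalPhase g) (s * √(g s)) s :=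
  ((by fun_prop : Continuous fun u => u * √(g u)).integral_hasStrictDerivAt 0 s).hasDerivAt

theorem deriv_eikonalPhase {g : ℝ → ℝ} (hg : Continuous g) :
    deriv (eikonalPhase g) = fun s => s * √(g s) :=
  funext fun s => (hasDerivAt_eikonalPhase hg s).deriv

theorem contDiffOn_eikonalPhase {g : ℝ → ℝ} {U : Set ℝ} (hg : ContDiff ℝ ∞ g)
    (hU : IsOpen U) (hpos : ∀ s ∈ U, 0 < g s) : ContDiffOn ℝ ∞ (eikonalPhase g) U := by
  rw [contDiffOn_infty_iff_deriv_of_isOpen hU, deriv_eikonalPhase hg.continuous]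
  refine ⟨fun s _ => ?_, contDiffOn_id.mul fun s hs => ?_⟩
  · exact (hasDerivAt_eikonalPhase hg.continuous s).differentiableAt.differentiableWithinAt
  · exact (hg.contDiffAt.sqrt (hpos s hs).ne').contDiffWithinAt

theorem hasDerivAt_id_mul_zero {h : ℝ → ℝ} (hh : ContinuousAt h 0) :
    HasDerivAt (fun s => s * h s) (h 0) 0 := by
  rw [hasDerivAt_iff_tendsto_slope]
  refine (hh.tendsto.mono_left nhdsWithin_le_nhds).congr' ?_
  filter_upwards [self_mem_nhdsWithin] with s hs
  rw [slope_def_field, sub_zero, zero_mul, sub_zero, mul_div_cancel_left₀ _ hs]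

theorem eikonal_equation_solution (κ : ℝ → ℝ) (hκ : ContDiff ℝ (⊤ : ℕ∞) κ)
    (hκ'' : deriv (deriv κ) 0 < 0) (δ : ℝ) (hδ : 0 < δ)
    (hmax : ∀ s ∈ Set.Ioo (-δ) δ, s ≠ 0 → κ s < κ 0) :
    ∃ δ' : ℝ, 0 < δ' ∧ δ' ≤ δ ∧
      ∃ ϑ : ℝ → ℝ, ContDiffOn ℝ (⊤ : ℕ∞) ϑ (Set.Ioo (-δ') δ') ∧
        ϑ 0 = 0 ∧ deriv ϑ 0 = 0 ∧
        (∀ s ∈ Set.Ioo (-δ') δ', (deriv ϑ s) ^ 2 = κ 0 - κ s) ∧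
        (∀ s ∈ Set.Ioo (-δ') δ', s ≠ 0 → 0 < s * deriv ϑ s) ∧
        deriv (deriv ϑ) 0 = Real.sqrt (-(deriv (deriv κ) 0) / 2) := by
  have hmax_loc : IsLocalMax κ 0 := by
    filter_upwards [Ioo_mem_nhds (neg_neg_of_pos hδ) hδ] with s hs
    rcases eq_or_ne s 0 with rfl | hs0
    exacts [le_rfl, (hmax s hs hs0).le]
  obtain ⟨g, hg, hg0, hκg⟩ := exists_contDiff_eq_add_sq_mul hκ hmax_loc.deriv_eq_zero
  have hg_neg : ContDiff ℝ ∞ fun s => -g s := hg.neg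
  have hpos : ∀ s ∈ Ioo (-δ) δ, 0 < -g s := by
    intro s hs
    rcases eq_or_ne s 0 with rfl | hs0
    · linarith
    · have := hmax s hs hs0
      rw [hκg s] at this
      exact neg_pos.mpr (neg_of_mul_neg_right (by linarith) (sq_nonneg s))
  refine ⟨δ, hδ, le_rfl, eikonalPhase fun s => -g s,
    contDiffOn_eikonalPhase hg_neg isOpen_Ioo hpos, eikonalPhase_zero _, ?_, fun s hs => ?_,
    fun s hs hs0 => ?_, ?_⟩ <;> rw [deriv_eikonalPhase hg_neg.continuous]
  · simp
  · rw [mul_pow, sq_sqrt (hpos s hs).le, hκg s]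
    ring
  · rw [← mul_assoc]
    exact mul_pos (mul_self_pos.mpr hs0) (sqrt_pos.mpr (hpos s hs))
  · rw [(hasDerivAt_id_mul_zero hg_neg.continuous.sqrt.continuousAt).deriv, hg0, neg_div]
end
end

section
/- Let δ' > 0 and let ϑ : (−δ',δ') → ℝ be a C^∞ function with ϑ'(0) = 0, ϑ'(s) ≠ 0 for all s ≠ 0, and ϑ''(0) ≠ 0. Then the function g(s) = (ϑ''(s) − ϑ''(0))/(2ϑ'(s)), a priori defined for s ≠ 0, extends to a C^∞ function on (−δ',δ'); and for every c₀ ∈ ℝ, the function ξ₀(s) = c₀·exp(−∫₀^s g(u) du) is the unique continuously differentiable function on (−δ',δ') with ξ₀(0) = c₀ that satisfies the transport equation 2ϑ'(s)·ξ₀'(s) + (ϑ''(s) − ϑ''(0))·ξ₀(s) = 0 for all s ∈ (−δ',δ'). -/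
/-!
Since `ϑ'(0) = 0`, Hadamard's lemma writes `ϑ'(s) = s A(s)` and `ϑ''(s) - ϑ''(0) = s B(s)`
with `A = dslope ϑ' 0` and `B = dslope ϑ'' 0` smooth, and `A` vanishes nowhere because
`A(0) = ϑ''(0)`. Hence `g = B / (2A)` is smooth and the transport equation reads
`2 s A(s) (ξ' + g ξ) = 0`. By continuity of `ξ' + g ξ` at `s = 0` it is equivalent to the
linear equation `ξ' + g ξ = 0`, whose solutions are `ξ(0) exp (-∫₀ˢ g)`.
-/

open Real Set MeasureTheory
open scoped ContDiff

section Hadamard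

variable {E : Type*} [NormedAddCommGroup E] [NormedSpace ℝ E] {U : Set ℝ}

theorem continuousOn_pow_smul_comp_mul {h : ℝ → E} (hU0 : StarConvex ℝ 0 U)
    (hh : ContinuousOn h U) (k : ℕ) {x : ℝ} (hx : x ∈ U) :
    ContinuousOn (fun t : ℝ => t ^ k • h (t * x)) (uIcc 0 1) := by
  rw [uIcc_of_le zero_le_one]
  exact (continuousOn_pow k).smul <|
    hh.comp (by fun_prop) fun t ht => hU0.smul_mem hx ht.1 ht.2

theorem hasDerivAt_integral_pow_smul_comp_mul {h : ℝ → E} (hU : IsOpen U)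
    (hU0 : StarConvex ℝ 0 U) (hh : ContDiffOn ℝ 1 h U) (k : ℕ) {x : ℝ} (hx : x ∈ U) :
    HasDerivAt (fun y => ∫ t in (0 : ℝ)..1, t ^ k • h (t * y))
      (∫ t in (0 : ℝ)..1, t ^ (k + 1) • deriv h (t * x)) x := by
  obtain ⟨ε, hε, hεU⟩ := Metric.nhds_basis_closedBall.mem_iff.1 (hU.mem_nhds hx)
  set K := (fun p : ℝ × ℝ => p.1 * p.2) '' (Icc 0 1 ×ˢ Metric.closedBall x ε)
  have hK : IsCompact K := (isCompact_Icc.prod (isCompact_closedBall x ε)).image (by fun_prop)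
  have hKU : K ⊆ U := by
    rintro _ ⟨⟨t, y⟩, ⟨ht, hy⟩, rfl⟩
    exact hU0.smul_mem (hεU hy) ht.1 ht.2
  have hh' : ContinuousOn (deriv h) U := hh.continuousOn_deriv_of_isOpen hU le_rfl
  obtain ⟨C, hC⟩ := hK.exists_bound_of_continuousOn (hh'.mono hKU)
  have hball : Metric.ball x ε ⊆ U := Metric.ball_subset_closedBall.trans hεU
  refine (intervalIntegral.hasDerivAt_integral_of_dominated_loc_of_deriv_le (μ := volume)
    (F := fun y t => t ^ k • h (t * y)) (F' := fun y t => t ^ (k + 1) • deriv h (t * y))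
    (bound := fun _ => C) (Metric.ball_mem_nhds x hε) ?_ ?_ ?_ ?_ intervalIntegrable_const ?_).2
  · filter_upwards [Metric.ball_mem_nhds x hε] with y hy
    exact ((continuousOn_pow_smul_comp_mul hU0 hh.continuousOn k (hball hy)).mono
      uIoc_subset_uIcc).aestronglyMeasurable measurableSet_uIoc
  · exact (continuousOn_pow_smul_comp_mul hU0 hh.continuousOn k hx).intervalIntegrable
  · exact ((continuousOn_pow_smul_comp_mul hU0 hh' (k + 1) hx).mono
      uIoc_subset_uIcc).aestronglyMeasurable measurableSet_uIoc
  · refine ae_of_all _ fun t ht y hy => ?_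
    rw [uIoc_of_le zero_le_one] at ht
    rw [norm_smul, norm_pow, Real.norm_of_nonneg ht.1.le]
    calc t ^ (k + 1) * ‖deriv h (t * y)‖ ≤ 1 * C := by
          gcongr
          · exact pow_le_one₀ ht.1.le ht.2
          · exact hC _
              ⟨(t, y), ⟨Ioc_subset_Icc_self ht, Metric.ball_subset_closedBall hy⟩, rfl⟩
      _ = C := one_mul C
  · refine ae_of_all _ fun t ht y hy => ?_
    rw [uIoc_of_le zero_le_one] at ht
    have hty : t * y ∈ U := hU0.smul_mem (hball hy) ht.1.le ht.2
    have hd : HasDerivAt h (deriv h (t * y)) (t * y) :=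
      ((hh.differentiableOn one_ne_zero).differentiableAt (hU.mem_nhds hty)).hasDerivAt
    convert (hd.scomp y ((hasDerivAt_id y).const_mul t)).const_smul (t ^ k) using 1
    · rfl
    · rw [mul_one, smul_smul, pow_succ]

theorem contDiffOn_integral_pow_smul_comp_mul (hU : IsOpen U) (hU0 : StarConvex ℝ 0 U)
    (n : ℕ) {h : ℝ → E} (hh : ContDiffOn ℝ ∞ h U) (k : ℕ) :
    ContDiffOn ℝ n (fun y => ∫ t in (0 : ℝ)..1, t ^ k • h (t * y)) U := by
  induction n generalizing h k with
  | zero =>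
    exact contDiffOn_zero.2 fun x hx =>
      (hasDerivAt_integral_pow_smul_comp_mul hU hU0 (hh.of_le (by simp)) k hx).continuousAt
        |>.continuousWithinAt
  | succ n ih =>
    have hderiv := fun x (hx : x ∈ U) =>
      hasDerivAt_integral_pow_smul_comp_mul hU hU0 (hh.of_le (by simp)) k hx
    rw [Nat.cast_succ, contDiffOn_succ_iff_deriv_of_isOpen hU]
    refine ⟨fun x hx => (hderiv x hx).differentiableAt.differentiableWithinAt,
      by simp, ?_⟩
    exact (ih (hh.deriv_of_isOpen hU le_rfl) (k + 1)).congr fun x hx => (hderiv x hx).deriv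

variable [CompleteSpace E]

/-- Hadamard's lemma: on `U`, `dslope f 0 x = ∫ t in 0..1, deriv f (t * x)`. -/
theorem ContDiffOn.dslope_zero {f : ℝ → E} (hU : IsOpen U) (hU0 : StarConvex ℝ 0 U)
    (hf : ContDiffOn ℝ ∞ f U) : ContDiffOn ℝ ∞ (dslope f 0) U := by
  have hsmooth : ContDiffOn ℝ ∞ (fun y => ∫ t in (0 : ℝ)..1, t ^ 0 • deriv f (t * y)) U :=
    contDiffOn_infty.2 fun n =>
      contDiffOn_integral_pow_smul_comp_mul hU hU0 n (hf.deriv_of_isOpen hU le_rfl) 0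
  refine hsmooth.congr fun x hx => ?_
  rcases eq_or_ne x 0 with rfl | hx0
  · simp
  · have hftc : ∫ u in (0 : ℝ)..x, deriv f u = f x - f 0 :=
      intervalIntegral.integral_deriv_of_contDiffOn_uIcc <| (hf.of_le (by simp)).mono <| by
        rw [← segment_eq_uIcc]; exact hU0.segment_subset hx
    have hsub := intervalIntegral.integral_comp_mul_right (a := 0) (b := 1) (deriv f) hx0
    rw [zero_mul, one_mul, hftc] at hsub
    simp only [pow_zero, one_smul]
    rw [dslope_of_ne _ hx0, slope_def_module, sub_zero, hsub]

end Hadamard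

section LinearODE

variable {U : Set ℝ} {a x : ℝ} {g : ℝ → ℝ}

theorem hasDerivAt_integral_of_continuousOn {E : Type*} [NormedAddCommGroup E] [NormedSpace ℝ E]
    [CompleteSpace E] {f : ℝ → E} (hU : IsOpen U) (hUc : U.OrdConnected) (ha : a ∈ U)
    (hf : ContinuousOn f U) (hx : x ∈ U) :
    HasDerivAt (fun y => ∫ u in a..y, f u) (f x) x :=
  intervalIntegral.integral_hasDerivAt_right (hf.mono (hUc.uIcc_subset ha hx)).intervalIntegrable
    (ContinuousAt.stronglyMeasurableAtFilter hU
      (fun _ hy => hf.continuousAt (hU.mem_nhds hy)) x hx)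
    (hf.continuousAt (hU.mem_nhds hx))

theorem contDiffOn_integral_of_contDiffOn (hU : IsOpen U) (hUc : U.OrdConnected) (ha : a ∈ U)
    (hg : ContDiffOn ℝ ∞ g U) : ContDiffOn ℝ ∞ (fun y => ∫ u in a..y, g u) U := by
  have hderiv := fun x (hx : x ∈ U) =>
    hasDerivAt_integral_of_continuousOn hU hUc ha hg.continuousOn hx
  rw [contDiffOn_infty_iff_deriv_of_isOpen hU]
  exact ⟨fun x hx => (hderiv x hx).differentiableAt.differentiableWithinAt,
    hg.congr fun x hx => (hderiv x hx).deriv⟩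

theorem hasDerivAt_mul_exp_neg_integral (hU : IsOpen U) (hUc : U.OrdConnected) (ha : a ∈ U)
    (hg : ContinuousOn g U) (c : ℝ) (hx : x ∈ U) :
    HasDerivAt (fun y => c * exp (-∫ u in a..y, g u))
      (-g x * (c * exp (-∫ u in a..x, g u))) x :=
  ((hasDerivAt_integral_of_continuousOn hU hUc ha hg hx).neg.exp.const_mul c).congr_deriv
    (by simp only [Pi.neg_apply]; ring)

theorem eq_mul_exp_neg_integral_of_deriv_add_mul_eq_zero (hU : IsOpen U) (hUc : U.OrdConnected)
    (ha : a ∈ U) (hg : ContinuousOn g U) {ξ : ℝ → ℝ} (hξ : DifferentiableOn ℝ ξ U)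
    (hode : ∀ y ∈ U, deriv ξ y + g y * ξ y = 0) (hx : x ∈ U) :
    ξ x = ξ a * exp (-∫ u in a..x, g u) := by
  have hderiv : ∀ y ∈ U, HasDerivAt (fun y => ξ y * exp (∫ u in a..y, g u)) 0 y := by
    intro y hy
    refine ((hξ.differentiableAt (hU.mem_nhds hy)).hasDerivAt.mul
      (hasDerivAt_integral_of_continuousOn hU hUc ha hg hy).exp).congr_deriv ?_
    linear_combination exp (∫ u in a..y, g u) * hode y hy
  have hconst := hU.is_const_of_deriv_eq_zero hUc.isPreconnected
    (fun y hy => (hderiv y hy).differentiableAt.differentiableWithinAt)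
    (fun y hy => (hderiv y hy).deriv) hx ha
  simp only [intervalIntegral.integral_same, exp_zero, mul_one] at hconst
  rw [← hconst, exp_neg, mul_assoc, mul_inv_cancel₀ (exp_pos _).ne', mul_one]

end LinearODE

theorem dslope_ne_zero_of_eq_zero {𝕜 E : Type*} [NontriviallyNormedField 𝕜]
    [NormedAddCommGroup E] [NormedSpace 𝕜 E] {f : 𝕜 → E} {a b : 𝕜} (hfa : f a = 0)
    (hf'a : deriv f a ≠ 0) (hfb : b ≠ a → f b ≠ 0) : dslope f a b ≠ 0 := by
  rcases eq_or_ne b a with rfl | hba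
  · rwa [dslope_same]
  · intro h
    exact hfb hba (by rw [← sub_smul_dslope_of_zero hfa b, h, smul_zero])

noncomputable def transportCoeff (ϑ : ℝ → ℝ) (s : ℝ) : ℝ :=
  dslope (deriv (deriv ϑ)) 0 s / (2 * dslope (deriv ϑ) 0 s)

section Transport

variable {U : Set ℝ} {ϑ : ℝ → ℝ}

theorem transportCoeff_of_ne_zero (h0 : deriv ϑ 0 = 0) {s : ℝ} (hs : s ≠ 0) :
    transportCoeff ϑ s = (deriv (deriv ϑ) s - deriv (deriv ϑ) 0) / (2 * deriv ϑ s) := by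
  rw [transportCoeff, dslope_of_ne _ hs, dslope_of_ne _ hs, slope_def_field, slope_def_field,
    h0, sub_zero, sub_zero]
  field_simp

theorem contDiffOn_transportCoeff (hU : IsOpen U) (hU0 : StarConvex ℝ 0 U)
    (hϑ : ContDiffOn ℝ ∞ ϑ U) (hA : ∀ s ∈ U, dslope (deriv ϑ) 0 s ≠ 0) :
    ContDiffOn ℝ ∞ (transportCoeff ϑ) U := by
  have hϑ' : ContDiffOn ℝ ∞ (deriv ϑ) U := hϑ.deriv_of_isOpen hU le_rfl
  exact ((hϑ'.deriv_of_isOpen hU le_rfl).dslope_zero hU hU0).div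
    (contDiffOn_const.mul (hϑ'.dslope_zero hU hU0)) fun s hs => mul_ne_zero two_ne_zero (hA s hs)

theorem transport_operator_eq_mul (h0 : deriv ϑ 0 = 0) {s : ℝ}
    (hA : dslope (deriv ϑ) 0 s ≠ 0) (η ζ : ℝ) :
    2 * deriv ϑ s * η + (deriv (deriv ϑ) s - deriv (deriv ϑ) 0) * ζ
      = 2 * s * dslope (deriv ϑ) 0 s * (η + transportCoeff ϑ s * ζ) := by
  have hϑ' : deriv ϑ s = s * dslope (deriv ϑ) 0 s := by
    simpa using (sub_smul_dslope_of_zero h0 s).symm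
  have hϑ'' : deriv (deriv ϑ) s - deriv (deriv ϑ) 0 = s * dslope (deriv (deriv ϑ)) 0 s := by
    simpa using (sub_smul_dslope (deriv (deriv ϑ)) 0 s).symm
  rw [hϑ', hϑ'', transportCoeff]
  field_simp

theorem deriv_add_transportCoeff_mul_eq_zero (hU : IsOpen U) (h0 : deriv ϑ 0 = 0)
    (hA : ∀ s ∈ U, dslope (deriv ϑ) 0 s ≠ 0) (hg : ContinuousOn (transportCoeff ϑ) U)
    {ξ : ℝ → ℝ} (hξ : ContDiffOn ℝ 1 ξ U)
    (hode : ∀ s ∈ U,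
      2 * deriv ϑ s * deriv ξ s + (deriv (deriv ϑ) s - deriv (deriv ϑ) 0) * ξ s = 0) :
    ∀ s ∈ U, deriv ξ s + transportCoeff ϑ s * ξ s = 0 := by
  have hφ : ContinuousOn (fun s => deriv ξ s + transportCoeff ϑ s * ξ s) U :=
    (hξ.continuousOn_deriv_of_isOpen hU le_rfl).add (hg.mul hξ.continuousOn)
  have hφ_ne : EqOn (fun s => deriv ξ s + transportCoeff ϑ s * ξ s) 0 (U ∩ {0}ᶜ) := by
    rintro s ⟨hs, hs0⟩
    have hode_s := hode s hs
    rw [transport_operator_eq_mul h0 (hA s hs)] at hode_s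
    exact (mul_eq_zero.1 hode_s).resolve_left (by simpa [hA s hs] using hs0)
  have hdense : U ⊆ closure (U ∩ {0}ᶜ) := by
    simpa [closure_compl_singleton] using hU.inter_closure (t := {(0 : ℝ)}ᶜ)
  exact fun s hs => hφ_ne.of_subset_closure hφ continuousOn_const inter_subset_left hdense hs

end Transport

theorem transport_equation_solution (δ' : ℝ) (hδ' : 0 < δ')
    (ϑ : ℝ → ℝ) (hϑ : ContDiffOn ℝ (⊤ : ℕ∞) ϑ (Set.Ioo (-δ') δ'))
    (h0 : deriv ϑ 0 = 0)
    (hne : ∀ s ∈ Set.Ioo (-δ') δ', s ≠ 0 → deriv ϑ s ≠ 0)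
    (h2 : deriv (deriv ϑ) 0 ≠ 0) :
    ∃ g : ℝ → ℝ, ContDiffOn ℝ (⊤ : ℕ∞) g (Set.Ioo (-δ') δ') ∧
      (∀ s ∈ Set.Ioo (-δ') δ', s ≠ 0 →
        g s = (deriv (deriv ϑ) s - deriv (deriv ϑ) 0) / (2 * deriv ϑ s)) ∧
      ∀ c₀ : ℝ,
        ((fun s : ℝ => c₀ * Real.exp (-(∫ u in (0 : ℝ)..s, g u))) 0 = c₀) ∧
        ContDiffOn ℝ 1 (fun s : ℝ => c₀ * Real.exp (-(∫ u in (0 : ℝ)..s, g u)))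
          (Set.Ioo (-δ') δ') ∧
        (∀ s ∈ Set.Ioo (-δ') δ',
          2 * deriv ϑ s * deriv (fun s : ℝ => c₀ * Real.exp (-(∫ u in (0 : ℝ)..s, g u))) s
            + (deriv (deriv ϑ) s - deriv (deriv ϑ) 0) *
                (fun s : ℝ => c₀ * Real.exp (-(∫ u in (0 : ℝ)..s, g u))) s = 0) ∧
        (∀ ξ : ℝ → ℝ, ContDiffOn ℝ 1 ξ (Set.Ioo (-δ') δ') → ξ 0 = c₀ →
          (∀ s ∈ Set.Ioo (-δ') δ',
            2 * deriv ϑ s * deriv ξ s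
              + (deriv (deriv ϑ) s - deriv (deriv ϑ) 0) * ξ s = 0) →
          ∀ s ∈ Set.Ioo (-δ') δ',
            ξ s = c₀ * Real.exp (-(∫ u in (0 : ℝ)..s, g u))) := by
  set U : Set ℝ := Set.Ioo (-δ') δ'
  have hU : IsOpen U := isOpen_Ioo
  have hUc : U.OrdConnected := ordConnected_Ioo
  have h0U : (0 : ℝ) ∈ U := ⟨neg_neg_of_pos hδ', hδ'⟩
  have hA : ∀ s ∈ U, dslope (deriv ϑ) 0 s ≠ 0 := fun s hs =>
    dslope_ne_zero_of_eq_zero h0 h2 (hne s hs)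
  have hg : ContDiffOn ℝ ∞ (transportCoeff ϑ) U :=
    contDiffOn_transportCoeff hU ((convex_Ioo _ _).starConvex h0U) hϑ hA
  refine ⟨transportCoeff ϑ, hg, fun s _ hs0 => transportCoeff_of_ne_zero h0 hs0,
    fun c₀ => ⟨by simp, ?_, fun s hs => ?_, fun ξ hξ hξ0 hode s hs => ?_⟩⟩
  · exact (contDiffOn_const.mul
      (contDiffOn_integral_of_contDiffOn hU hUc h0U hg).neg.exp).of_le (by simp)
  · rw [transport_operator_eq_mul h0 (hA s hs),
      (hasDerivAt_mul_exp_neg_integral hU hUc h0U hg.continuousOn c₀ hs).deriv]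
    ring
  · rw [← hξ0]
    exact eq_mul_exp_neg_integral_of_deriv_add_mul_eq_zero hU hUc h0U hg.continuousOn
      (hξ.differentiableOn one_ne_zero)
      (deriv_add_transportCoeff_mul_eq_zero hU h0 hA hg.continuousOn hξ hode) hs
end

section
/- Let ρ ∈ (0,1/2) and let χ : [0,∞) → [0,1] be a C^∞ function with χ = 1 on [0,1/4] and χ = 0 on [1/2,∞). There exist constants C > 0 and h₀ ∈ (0,1) such that for all h ∈ (0,h₀) and all β ∈ ℝ with |β|h^{1/2−ρ} < 1/3, the function f(τ) = χ(τ·h^{ρ})·√2·e^{−τ} on [0, h^{−ρ}] satisfies: f'(0) = −f(0), f(h^{−ρ}) = 0, ∫₀^{h^{−ρ}} |−f''(τ) + βh^{1/2}(1 − βh^{1/2}τ)^{−1}f'(τ) + (1 + βh^{1/2})f(τ)|²·(1 − βh^{1/2}τ) dτ ≤ C·(β⁴h² + exp(−h^{−ρ}/4)), and |∫₀^{h^{−ρ}} f(τ)²·(1 − βh^{1/2}τ) dτ − 1| ≤ C·(|β|h^{1/2} + exp(−h^{−ρ}/4)). -/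
/-!
Write `ε = h ^ ρ`, `a = h ^ (-ρ) = 1 / ε`, `s = β h ^ (1/2)` and `g τ = √2 e^{-τ}`, so that
`f τ = χ (τ ε) g τ`; the hypothesis on `β` reads `|s| a < 1/3` and keeps the weight `1 - s τ` in
`[2/3, 4/3]` on `[0, a]`. Since `g' = -g`, the residual `-f'' + s (1 - s τ)⁻¹ f' + (1 + s) f` is `g`
times `ε ((2 + s (1 - s τ)⁻¹) χ' - ε χ'') (τ ε) - s τ · s (1 - s τ)⁻¹ · χ (τ ε)`.

For `τ ≤ a/8` the cutoff is flat, only the last term survives, and its weighted square is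
`O(s⁴ τ² e^{-2τ})`, which integrates to `O(s⁴) = O(β⁴ h²)`. On `[a/8, a]` the whole coefficient
is bounded uniformly in `h`, and `∫_{a/8}^a e^{-2τ} ≤ e^{-a/4} / 2`. (Cutting at `a/8` rather than
`a/4` keeps `τ ε` strictly below `1/4`, where `χ'` and `χ''` are known to vanish.)

For the norm, `f² = 2 e^{-2τ}` on `[0, a/4]`, so `∫ f² = 1 + O(e^{-a/2})`, and the weight moves it
by at most `|s| ∫ τ f² ≤ 2 |s|`.
-/

open MeasureTheory Real Set

noncomputable section

theorem derivWithin_Ici_eq_zero_of_eqOn_Ico {F : ℝ → ℝ} {c r x : ℝ}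
    (hF : EqOn F (fun _ => c) (Ico 0 r)) (hx : x ∈ Ico 0 r) : derivWithin F (Ici 0) x = 0 := by
  have hFc : F =ᶠ[nhdsWithin x (Ici 0)] fun _ => c :=
    Filter.mem_of_superset (inter_mem_nhdsWithin _ (Iio_mem_nhds hx.2))
      fun y hy => hF ⟨hy.1, hy.2⟩
  rw [hFc.derivWithin_eq (hF hx), derivWithin_fun_const, Pi.zero_apply]

theorem hasDerivWithinAt_comp_mul_mul_exp_neg {u u' : ℝ → ℝ} {ε : ℝ} (c : ℝ) (hε : 0 ≤ ε)
    (hu : ∀ x ∈ Ici (0 : ℝ), HasDerivWithinAt u (u' x) (Ici 0) x) {τ : ℝ}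
    (hτ : τ ∈ Ici (0 : ℝ)) :
    HasDerivWithinAt (fun t => u (t * ε) * (c * exp (-t)))
      ((ε * u' (τ * ε) - u (τ * ε)) * (c * exp (-τ))) (Ici 0) τ := by
  have hcomp : HasDerivWithinAt (fun t => u (t * ε)) (u' (τ * ε) * ε) (Ici 0) τ :=
    (hu _ (mul_nonneg hτ hε)).comp τ (hasDerivAt_mul_const ε).hasDerivWithinAt
      fun t ht => mul_nonneg ht hε
  have hexp : HasDerivAt (fun t => c * exp (-t)) (-(c * exp (-τ))) τ := by
    simpa using ((hasDerivAt_neg τ).exp).const_mul c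
  exact (hcomp.mul hexp.hasDerivWithinAt).congr_deriv (by ring)

theorem ContinuousOn.comp_mul_const_Ici {u : ℝ → ℝ} {ε : ℝ} (hu : ContinuousOn u (Ici 0))
    (hε : 0 ≤ ε) : ContinuousOn (fun τ => u (τ * ε)) (Ici 0) :=
  hu.comp (continuous_mul_const ε).continuousOn fun _ hτ => mul_nonneg hτ hε

theorem mul_exp_neg_two_mul_le (τ : ℝ) : τ * exp (-2 * τ) ≤ exp (-τ) := by
  have : τ ≤ exp τ := by linarith [add_one_le_exp τ]
  calc τ * exp (-2 * τ) ≤ exp τ * exp (-2 * τ) := by gcongr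
    _ = exp (-τ) := by rw [← exp_add]; ring_nf

theorem sq_mul_exp_neg_two_mul_le {τ : ℝ} (hτ : 0 ≤ τ) :
    τ ^ 2 * exp (-2 * τ) ≤ 2 * exp (-τ) := by
  have : τ ^ 2 ≤ 2 * exp τ := by nlinarith [quadratic_le_exp_of_nonneg hτ]
  calc τ ^ 2 * exp (-2 * τ) ≤ 2 * exp τ * exp (-2 * τ) := by gcongr
    _ = 2 * exp (-τ) := by rw [mul_assoc, ← exp_add]; ring_nf

theorem sq_sqrt_two_mul_exp_neg (τ : ℝ) : (√2 * exp (-τ)) ^ 2 = 2 * exp (-2 * τ) := by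
  rw [mul_pow, sq_sqrt zero_le_two, ← exp_nat_mul]
  ring_nf

theorem integral_exp_neg_mul {k : ℝ} (hk : k ≠ 0) (c b : ℝ) :
    ∫ τ in c..b, exp (-k * τ) = (exp (-k * c) - exp (-k * b)) / k := by
  have hderiv (τ : ℝ) : HasDerivAt (fun τ => -exp (-k * τ) / k) (exp (-k * τ)) τ := by
    refine (((hasDerivAt_id τ).const_mul (-k)).exp.neg.div_const k).congr_deriv ?_
    field_simp
    simp
  rw [intervalIntegral.integral_eq_sub_of_hasDerivAt (fun τ _ => hderiv τ)
    ((by fun_prop : Continuous fun τ => exp (-k * τ)).intervalIntegrable c b)]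
  ring

theorem integral_exp_neg (b : ℝ) : ∫ τ in (0 : ℝ)..b, exp (-τ) = 1 - exp (-b) := by
  rw [intervalIntegral.integral_comp_neg (fun τ => exp τ), integral_exp, neg_zero, exp_zero]

theorem integral_two_mul_exp_neg_two_mul (b : ℝ) :
    ∫ τ in (0 : ℝ)..b, 2 * exp (-2 * τ) = 1 - exp (-2 * b) := by
  rw [intervalIntegral.integral_const_mul, integral_exp_neg_mul two_ne_zero, mul_zero, exp_zero]
  ring

theorem integral_le_of_le_exp_neg_of_le_exp_neg_two_mul {G : ℝ → ℝ} {a A B : ℝ} (ha : 0 ≤ a)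
    (hG : ContinuousOn G (Icc 0 a)) (hA : 0 ≤ A) (hB : 0 ≤ B)
    (hnear : ∀ τ ∈ Icc 0 (a / 8), G τ ≤ A * exp (-τ))
    (hfar : ∀ τ ∈ Icc (a / 8) a, G τ ≤ B * exp (-2 * τ)) :
    ∫ τ in (0 : ℝ)..a, G τ ≤ A + B / 2 * exp (-a / 4) := by
  have hGi : ∀ b c, 0 ≤ b → b ≤ c → c ≤ a → IntervalIntegrable G volume b c :=
    fun b c hb hbc hca => (hG.mono (Icc_subset_Icc hb hca)).intervalIntegrable_of_Icc hbc
  have hGnear := hGi 0 (a / 8) le_rfl (by linarith) (by linarith)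
  have hGfar := hGi (a / 8) a (by linarith) (by linarith) le_rfl
  have h₁ : ∫ τ in (0 : ℝ)..a / 8, G τ ≤ A := by
    calc ∫ τ in (0 : ℝ)..a / 8, G τ ≤ ∫ τ in (0 : ℝ)..a / 8, A * exp (-τ) :=
          intervalIntegral.integral_mono_on (by linarith) hGnear
            ((by fun_prop : Continuous fun τ => A * exp (-τ)).intervalIntegrable _ _) hnear
      _ = A * (1 - exp (-(a / 8))) := by
          rw [intervalIntegral.integral_const_mul, integral_exp_neg]
      _ ≤ A := by nlinarith [exp_pos (-(a / 8))]
  have h₂ : ∫ τ in a / 8..a, G τ ≤ B / 2 * exp (-a / 4) := by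
    calc ∫ τ in a / 8..a, G τ ≤ ∫ τ in a / 8..a, B * exp (-2 * τ) :=
          intervalIntegral.integral_mono_on (by linarith) hGfar
            ((by fun_prop : Continuous fun τ => B * exp (-2 * τ)).intervalIntegrable _ _) hfar
      _ = B / 2 * (exp (-a / 4) - exp (-2 * a)) := by
          rw [intervalIntegral.integral_const_mul, integral_exp_neg_mul two_ne_zero]
          ring_nf
      _ ≤ B / 2 * exp (-a / 4) := by nlinarith [exp_pos (-2 * a)]
  rw [← intervalIntegral.integral_add_adjacent_intervals hGnear hGfar]
  linarith

theorem abs_mul_lt_of_mem_Icc {s a τ : ℝ} (hsa : |s| * a < 1 / 3) (hτ : τ ∈ Icc 0 a) :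
    |s * τ| < 1 / 3 := by
  rw [abs_mul, abs_of_nonneg hτ.1]
  exact (mul_le_mul_of_nonneg_left hτ.2 (abs_nonneg s)).trans_lt hsa

theorem one_sub_mul_mem_Icc_s19 {s a τ : ℝ} (hsa : |s| * a < 1 / 3) (hτ : τ ∈ Icc 0 a) :
    1 - s * τ ∈ Icc (2 / 3 : ℝ) (4 / 3) := by
  have := abs_lt.1 (abs_mul_lt_of_mem_Icc hsa hτ)
  constructor <;> linarith

theorem abs_mul_inv_one_sub_le {s τ : ℝ} (hs : |s| < 1 / 3) (hsτ : |s * τ| < 1 / 3) :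
    |s * (1 - s * τ)⁻¹| ≤ 1 / 2 := by
  have hw : 2 / 3 ≤ 1 - s * τ := by linarith [(abs_lt.1 hsτ).2]
  rw [abs_mul, abs_inv, abs_of_pos (by linarith : 0 < 1 - s * τ), ← div_eq_mul_inv,
    div_le_iff₀ (by linarith)]
  linarith

section Quasimode

variable {χ : ℝ → ℝ} {ε s : ℝ}

theorem derivWithin_comp_mul_mul_exp_neg_eqOn (hχ : DifferentiableOn ℝ χ (Ici 0)) (c : ℝ)
    (hε : 0 ≤ ε) :
    EqOn (derivWithin (fun τ => χ (τ * ε) * (c * exp (-τ))) (Ici 0))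
      (fun τ => (ε * derivWithin χ (Ici 0) (τ * ε) - χ (τ * ε)) * (c * exp (-τ))) (Ici 0) :=
  fun τ hτ => (hasDerivWithinAt_comp_mul_mul_exp_neg c hε
    (fun x hx => (hχ x hx).hasDerivWithinAt) hτ).derivWithin (uniqueDiffOn_Ici 0 τ hτ)

theorem derivWithin_derivWithin_comp_mul_mul_exp_neg_eqOn (hχ : ContDiffOn ℝ 2 χ (Ici 0))
    (c : ℝ) (hε : 0 ≤ ε) :
    EqOn (derivWithin (derivWithin (fun τ => χ (τ * ε) * (c * exp (-τ))) (Ici 0)) (Ici 0))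
      (fun τ => (ε ^ 2 * derivWithin (derivWithin χ (Ici 0)) (Ici 0) (τ * ε)
        - 2 * ε * derivWithin χ (Ici 0) (τ * ε) + χ (τ * ε)) * (c * exp (-τ))) (Ici 0) := by
  intro τ hτ
  have hχ' := hχ.differentiableOn (by norm_num)
  have hφ' := (hχ.derivWithin (uniqueDiffOn_Ici 0)
    (by norm_num : (1 : WithTop ℕ∞) + 1 ≤ 2)).differentiableOn one_ne_zero
  have hv : ∀ x ∈ Ici (0 : ℝ), HasDerivWithinAt (fun x => ε * derivWithin χ (Ici 0) x - χ x)
      (ε * derivWithin (derivWithin χ (Ici 0)) (Ici 0) x - derivWithin χ (Ici 0) x) (Ici 0) x :=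
    fun x hx => ((hφ' x hx).hasDerivWithinAt.const_mul ε).sub (hχ' x hx).hasDerivWithinAt
  have hf' := derivWithin_comp_mul_mul_exp_neg_eqOn hχ' c hε
  rw [derivWithin_congr hf' (hf' hτ),
    (hasDerivWithinAt_comp_mul_mul_exp_neg c hε hv hτ).derivWithin (uniqueDiffOn_Ici 0 τ hτ)]
  ring

theorem exists_abs_derivWithin_le (hχ : ContDiffOn ℝ 2 χ (Ici 0)) :
    ∃ M, ∀ x ∈ Icc (0 : ℝ) 1, |derivWithin χ (Ici 0) x| ≤ M ∧
      |derivWithin (derivWithin χ (Ici 0)) (Ici 0) x| ≤ M := by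
  have hφ := hχ.derivWithin (uniqueDiffOn_Ici 0) (by norm_num : (1 : WithTop ℕ∞) + 1 ≤ 2)
  have hφ₂ := hφ.derivWithin (uniqueDiffOn_Ici 0) (by norm_num : (0 : WithTop ℕ∞) + 1 ≤ 1)
  obtain ⟨M, hM⟩ := isCompact_Icc.exists_bound_of_continuousOn
    ((hφ.continuousOn.prodMk hφ₂.continuousOn).mono (fun _ hx => hx.1 : Icc (0 : ℝ) 1 ⊆ Ici 0))
  exact ⟨M, fun x hx => by simpa [Prod.norm_def] using hM x hx⟩

def quasimode (χ : ℝ → ℝ) (ε τ : ℝ) : ℝ :=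
  χ (τ * ε) * (√2 * exp (-τ))

theorem quasimode_sq (τ : ℝ) : quasimode χ ε τ ^ 2 = χ (τ * ε) ^ 2 * (2 * exp (-2 * τ)) := by
  rw [quasimode, mul_pow, sq_sqrt_two_mul_exp_neg]

theorem sq_quasimode_le (hχ01 : ∀ x ∈ Ici (0 : ℝ), χ x ∈ Icc (0 : ℝ) 1) (hε : 0 ≤ ε) {τ : ℝ}
    (hτ : 0 ≤ τ) : quasimode χ ε τ ^ 2 ≤ 2 * exp (-2 * τ) := by
  have hχτ := hχ01 _ (mul_nonneg hτ hε)
  rw [quasimode_sq]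
  exact mul_le_of_le_one_left (by positivity) (pow_le_one₀ hχτ.1 hχτ.2)

theorem continuousOn_quasimode (hχc : ContinuousOn χ (Ici 0)) (hε : 0 ≤ ε) :
    ContinuousOn (quasimode χ ε) (Ici 0) :=
  (hχc.comp_mul_const_Ici hε).mul (by fun_prop)

theorem derivWithin_quasimode_zero (hχ : DifferentiableOn ℝ χ (Ici 0))
    (hχ1 : ∀ x ∈ Icc (0 : ℝ) (1 / 4), χ x = 1) (hε : 0 ≤ ε) :
    derivWithin (quasimode χ ε) (Ici 0) 0 = -quasimode χ ε 0 := by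
  have hφ : derivWithin χ (Ici 0) 0 = 0 :=
    derivWithin_Ici_eq_zero_of_eqOn_Ico (fun y hy => hχ1 y (Ico_subset_Icc_self hy))
      ⟨le_rfl, by norm_num⟩
  unfold quasimode
  rw [derivWithin_comp_mul_mul_exp_neg_eqOn hχ _ hε self_mem_Ici]
  simp only [zero_mul, hφ]
  ring

-- The `χ` term comes from `s (1 - (1 - s τ)⁻¹) = -s τ · s (1 - s τ)⁻¹`.
def residualCoeff (χ : ℝ → ℝ) (ε s τ : ℝ) : ℝ :=
  ε * ((2 + s * (1 - s * τ)⁻¹) * derivWithin χ (Ici 0) (τ * ε)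
      - ε * derivWithin (derivWithin χ (Ici 0)) (Ici 0) (τ * ε))
    - s * τ * (s * (1 - s * τ)⁻¹) * χ (τ * ε)

theorem quasimode_residual_eq (hχ : ContDiffOn ℝ 2 χ (Ici 0)) (hε : 0 ≤ ε) {τ : ℝ} (hτ : 0 ≤ τ)
    (hw : 1 - s * τ ≠ 0) :
    -derivWithin (derivWithin (quasimode χ ε) (Ici 0)) (Ici 0) τ
      + s * (1 - s * τ)⁻¹ * derivWithin (quasimode χ ε) (Ici 0) τ + (1 + s) * quasimode χ ε τ
      = residualCoeff χ ε s τ * (√2 * exp (-τ)) := by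
  unfold quasimode
  rw [derivWithin_derivWithin_comp_mul_mul_exp_neg_eqOn hχ _ hε hτ,
    derivWithin_comp_mul_mul_exp_neg_eqOn (hχ.differentiableOn (by norm_num)) _ hε hτ,
    residualCoeff]
  linear_combination -(χ (τ * ε) * s * (√2 * exp (-τ))) * mul_inv_cancel₀ hw

theorem residualCoeff_eq_of_flat (hχ1 : ∀ x ∈ Icc (0 : ℝ) (1 / 4), χ x = 1) {τ : ℝ}
    (hτ : τ * ε ∈ Ico (0 : ℝ) (1 / 4)) :
    residualCoeff χ ε s τ = -(s * τ * (s * (1 - s * τ)⁻¹) * χ (τ * ε)) := by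
  have hφ : EqOn (derivWithin χ (Ici 0)) 0 (Ico 0 (1 / 4)) := fun x hx =>
    derivWithin_Ici_eq_zero_of_eqOn_Ico (fun y hy => hχ1 y (Ico_subset_Icc_self hy)) hx
  rw [residualCoeff, hφ hτ, derivWithin_Ici_eq_zero_of_eqOn_Ico hφ hτ, Pi.zero_apply]
  ring

theorem continuousOn_residualCoeff (hχ : ContDiffOn ℝ 2 χ (Ici 0)) (hε : 0 ≤ ε) {a : ℝ}
    (hw : ∀ τ ∈ Icc 0 a, 1 - s * τ ≠ 0) : ContinuousOn (residualCoeff χ ε s) (Icc 0 a) := by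
  have hφ := hχ.derivWithin (uniqueDiffOn_Ici 0) (by norm_num : (1 : WithTop ℕ∞) + 1 ≤ 2)
  have hφ₂ := hφ.derivWithin (uniqueDiffOn_Ici 0) (by norm_num : (0 : WithTop ℕ∞) + 1 ≤ 1)
  have hsub : Icc 0 a ⊆ Ici 0 := fun _ hx => hx.1
  have h0 := (hχ.continuousOn.comp_mul_const_Ici hε).mono hsub
  have h1 := (hφ.continuousOn.comp_mul_const_Ici hε).mono hsub
  have h2 := (hφ₂.continuousOn.comp_mul_const_Ici hε).mono hsub
  have hr : ContinuousOn (fun τ => s * (1 - s * τ)⁻¹) (Icc 0 a) :=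
    continuousOn_const.mul ((continuous_const.sub (continuous_const_mul s)).continuousOn.inv₀ hw)
  exact (continuousOn_const.mul (((continuousOn_const.add hr).mul h1).sub
    (continuousOn_const.mul h2))).sub (((continuous_const_mul s).continuousOn.mul hr).mul h0)

theorem abs_residualCoeff_le {a : ℝ} (hε : 0 < ε) (hε1 : ε ≤ 1) (haε : a * ε = 1)
    (hsa : |s| * a < 1 / 3) (hχ01 : ∀ x ∈ Ici (0 : ℝ), χ x ∈ Icc (0 : ℝ) 1) {M : ℝ}
    (hM : ∀ x ∈ Icc (0 : ℝ) 1, |derivWithin χ (Ici 0) x| ≤ M ∧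
      |derivWithin (derivWithin χ (Ici 0)) (Ici 0) x| ≤ M)
    {τ : ℝ} (hτ : τ ∈ Icc 0 a) : |residualCoeff χ ε s τ| ≤ 4 * M + 1 := by
  have ha : 1 ≤ a := by nlinarith
  have hs : |s| < 1 / 3 := by simpa using abs_mul_lt_of_mem_Icc hsa ⟨zero_le_one, ha⟩
  have hsτ := abs_mul_lt_of_mem_Icc hsa hτ
  have hτε : τ * ε ∈ Icc (0 : ℝ) 1 :=
    ⟨mul_nonneg hτ.1 hε.le, haε ▸ mul_le_mul_of_nonneg_right hτ.2 hε.le⟩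
  obtain ⟨hp, hq⟩ := hM _ hτε
  have hχτ := hχ01 _ hτε.1
  have hc : |χ (τ * ε)| ≤ 1 := abs_le.2 ⟨by linarith [hχτ.1], hχτ.2⟩
  have hr := abs_mul_inv_one_sub_le hs hsτ
  set r := s * (1 - s * τ)⁻¹
  have h2r : |2 + r| ≤ 5 / 2 := (abs_add_le _ _).trans (by norm_num; linarith)
  have hε' : |ε| ≤ 1 := by rwa [abs_of_pos hε]
  have hM0 : 0 ≤ M := (abs_nonneg _).trans hp
  rw [residualCoeff]
  calc |ε * ((2 + r) * derivWithin χ (Ici 0) (τ * ε)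
        - ε * derivWithin (derivWithin χ (Ici 0)) (Ici 0) (τ * ε)) - s * τ * r * χ (τ * ε)|
      ≤ |ε| * (|2 + r| * |derivWithin χ (Ici 0) (τ * ε)|
        + |ε| * |derivWithin (derivWithin χ (Ici 0)) (Ici 0) (τ * ε)|)
        + |s * τ| * |r| * |χ (τ * ε)| := by
        refine (abs_sub _ _).trans (add_le_add ?_ (by rw [abs_mul, abs_mul]))
        rw [abs_mul]
        gcongr
        exact (abs_sub _ _).trans (by rw [abs_mul, abs_mul])
    _ ≤ 1 * (5 / 2 * M + 1 * M) + 1 / 3 * (1 / 2) * 1 := by gcongr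
    _ ≤ 4 * M + 1 := by linarith

theorem sq_residualCoeff_mul_weight_le_of_flat
    (hχ01 : ∀ x ∈ Ici (0 : ℝ), χ x ∈ Icc (0 : ℝ) 1) (hχ1 : ∀ x ∈ Icc (0 : ℝ) (1 / 4), χ x = 1)
    {a τ : ℝ} (hε : 0 < ε) (haε : a * ε = 1) (hsa : |s| * a < 1 / 3) (hτ : τ ∈ Icc 0 (a / 8)) :
    residualCoeff χ ε s τ ^ 2 * (2 * exp (-2 * τ)) * (1 - s * τ) ≤ 6 * s ^ 4 * exp (-τ) := by
  have ha : 0 ≤ a := by nlinarith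
  have hτε : τ * ε ∈ Ico (0 : ℝ) (1 / 4) :=
    ⟨mul_nonneg hτ.1 hε.le, by nlinarith [mul_le_mul_of_nonneg_right hτ.2 hε.le]⟩
  have hw := (one_sub_mul_mem_Icc_s19 hsa ⟨hτ.1, hτ.2.trans (by linarith)⟩).1
  have hinv : (1 - s * τ)⁻¹ ≤ 3 / 2 := by
    rw [inv_le_comm₀ (by linarith) (by norm_num)]; linarith
  have hχτ := hχ01 _ hτε.1
  rw [residualCoeff_eq_of_flat hχ1 hτε, neg_sq]
  calc (s * τ * (s * (1 - s * τ)⁻¹) * χ (τ * ε)) ^ 2 * (2 * exp (-2 * τ)) * (1 - s * τ)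
      = 2 * s ^ 4 * χ (τ * ε) ^ 2 * (1 - s * τ)⁻¹ * (τ ^ 2 * exp (-2 * τ)) := by
        field_simp
    _ ≤ 2 * s ^ 4 * 1 * (3 / 2) * (2 * exp (-τ)) := by
        gcongr 2 * s ^ 4 * ?_ * ?_ * ?_
        · exact pow_le_one₀ hχτ.1 hχτ.2
        · exact sq_mul_exp_neg_two_mul_le hτ.1
    _ = 6 * s ^ 4 * exp (-τ) := by ring

theorem sq_residualCoeff_mul_weight_le {a : ℝ} (hε : 0 < ε) (hε1 : ε ≤ 1) (haε : a * ε = 1)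
    (hsa : |s| * a < 1 / 3) (hχ01 : ∀ x ∈ Ici (0 : ℝ), χ x ∈ Icc (0 : ℝ) 1) {M : ℝ}
    (hM : ∀ x ∈ Icc (0 : ℝ) 1, |derivWithin χ (Ici 0) x| ≤ M ∧
      |derivWithin (derivWithin χ (Ici 0)) (Ici 0) x| ≤ M)
    {τ : ℝ} (hτ : τ ∈ Icc 0 a) :
    residualCoeff χ ε s τ ^ 2 * (2 * exp (-2 * τ)) * (1 - s * τ)
      ≤ 3 * (4 * M + 1) ^ 2 * exp (-2 * τ) := by
  have hK := abs_le.1 (abs_residualCoeff_le hε hε1 haε hsa hχ01 hM hτ)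
  have hw := one_sub_mul_mem_Icc_s19 hsa hτ
  calc residualCoeff χ ε s τ ^ 2 * (2 * exp (-2 * τ)) * (1 - s * τ)
      ≤ (4 * M + 1) ^ 2 * (2 * exp (-2 * τ)) * (4 / 3) :=
        mul_le_mul (mul_le_mul_of_nonneg_right (sq_le_sq' hK.1 hK.2) (by positivity)) hw.2
          (by linarith [hw.1]) (by positivity)
    _ ≤ 3 * (4 * M + 1) ^ 2 * exp (-2 * τ) := by
        nlinarith [sq_nonneg (4 * M + 1), exp_pos (-2 * τ)]

theorem integral_sq_quasimode_residual_le (hχ : ContDiffOn ℝ 2 χ (Ici 0))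
    (hχ01 : ∀ x ∈ Ici (0 : ℝ), χ x ∈ Icc (0 : ℝ) 1) (hχ1 : ∀ x ∈ Icc (0 : ℝ) (1 / 4), χ x = 1)
    {M : ℝ} (hM : ∀ x ∈ Icc (0 : ℝ) 1, |derivWithin χ (Ici 0) x| ≤ M ∧
      |derivWithin (derivWithin χ (Ici 0)) (Ici 0) x| ≤ M)
    {a : ℝ} (hε : 0 < ε) (hε1 : ε ≤ 1) (haε : a * ε = 1) (hsa : |s| * a < 1 / 3) :
    ∫ τ in (0 : ℝ)..a, |-derivWithin (derivWithin (quasimode χ ε) (Ici 0)) (Ici 0) τ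
        + s * (1 - s * τ)⁻¹ * derivWithin (quasimode χ ε) (Ici 0) τ
        + (1 + s) * quasimode χ ε τ| ^ 2 * (1 - s * τ)
      ≤ 6 * s ^ 4 + 3 * (4 * M + 1) ^ 2 / 2 * exp (-a / 4) := by
  have ha : 0 ≤ a := by nlinarith
  have hw0 : ∀ τ ∈ Icc 0 a, 1 - s * τ ≠ 0 := fun τ hτ => by
    linarith [(one_sub_mul_mem_Icc_s19 hsa hτ).1]
  rw [intervalIntegral.integral_congr (g := fun τ =>
    residualCoeff χ ε s τ ^ 2 * (2 * exp (-2 * τ)) * (1 - s * τ)) fun τ hτ => ?_]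
  · exact integral_le_of_le_exp_neg_of_le_exp_neg_two_mul ha
      ((((continuousOn_residualCoeff hχ hε.le hw0).pow 2).mul (by fun_prop)).mul (by fun_prop))
      (by positivity) (by positivity)
      (fun τ hτ => sq_residualCoeff_mul_weight_le_of_flat hχ01 hχ1 hε haε hsa hτ)
      (fun τ hτ => sq_residualCoeff_mul_weight_le hε hε1 haε hsa hχ01 hM
        ⟨(by positivity : 0 ≤ a / 8).trans hτ.1, hτ.2⟩)
  · rw [uIcc_of_le ha] at hτ
    simp only
    rw [quasimode_residual_eq hχ hε.le hτ.1 (hw0 τ hτ), sq_abs, mul_pow, sq_sqrt_two_mul_exp_neg]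

theorem integral_sq_quasimode_mem_Icc (hχc : ContinuousOn χ (Ici 0))
    (hχ01 : ∀ x ∈ Ici (0 : ℝ), χ x ∈ Icc (0 : ℝ) 1) (hχ1 : ∀ x ∈ Icc (0 : ℝ) (1 / 4), χ x = 1)
    {a : ℝ} (hε : 0 < ε) (haε : a * ε = 1) :
    ∫ τ in (0 : ℝ)..a, quasimode χ ε τ ^ 2 ∈ Icc (1 - exp (-a / 2)) 1 := by
  have ha : 0 ≤ a := by nlinarith
  have hint : IntervalIntegrable (fun τ => quasimode χ ε τ ^ 2) volume 0 a :=
    (((continuousOn_quasimode hχc hε.le).pow 2).mono fun _ hx => hx.1).intervalIntegrable_of_Icc ha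
  have hflat : EqOn (fun τ => quasimode χ ε τ ^ 2) (fun τ => 2 * exp (-2 * τ)) (uIcc 0 (a / 4)) :=
    fun τ hτ => by
      rw [uIcc_of_le (by linarith)] at hτ
      have hτε : τ * ε ∈ Icc (0 : ℝ) (1 / 4) :=
        ⟨mul_nonneg hτ.1 hε.le, by nlinarith [mul_le_mul_of_nonneg_right hτ.2 hε.le]⟩
      simp only [quasimode_sq, hχ1 _ hτε, one_pow, one_mul]
  constructor
  · calc 1 - exp (-a / 2) = ∫ τ in (0 : ℝ)..a / 4, quasimode χ ε τ ^ 2 := by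
          rw [intervalIntegral.integral_congr hflat, integral_two_mul_exp_neg_two_mul]
          ring_nf
      _ ≤ ∫ τ in (0 : ℝ)..a, quasimode χ ε τ ^ 2 :=
          intervalIntegral.integral_mono_interval le_rfl (by linarith) (by linarith)
            (Filter.Eventually.of_forall fun τ => sq_nonneg _) hint
  · calc ∫ τ in (0 : ℝ)..a, quasimode χ ε τ ^ 2 ≤ ∫ τ in (0 : ℝ)..a, 2 * exp (-2 * τ) :=
          intervalIntegral.integral_mono_on ha hint
            ((by fun_prop : Continuous fun τ => 2 * exp (-2 * τ)).intervalIntegrable _ _)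
            fun τ hτ => sq_quasimode_le hχ01 hε.le hτ.1
      _ ≤ 1 := by rw [integral_two_mul_exp_neg_two_mul]; linarith [exp_pos (-2 * a)]

theorem integral_mul_sq_quasimode_mem_Icc (hχc : ContinuousOn χ (Ici 0))
    (hχ01 : ∀ x ∈ Ici (0 : ℝ), χ x ∈ Icc (0 : ℝ) 1) {a : ℝ} (hε : 0 ≤ ε) (ha : 0 ≤ a) :
    ∫ τ in (0 : ℝ)..a, τ * quasimode χ ε τ ^ 2 ∈ Icc 0 2 := by
  have hint : IntervalIntegrable (fun τ => τ * quasimode χ ε τ ^ 2) volume 0 a :=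
    ((continuousOn_id.mul ((continuousOn_quasimode hχc hε).pow 2)).mono
      fun _ hx => hx.1).intervalIntegrable_of_Icc ha
  refine ⟨intervalIntegral.integral_nonneg ha fun τ hτ => mul_nonneg hτ.1 (sq_nonneg _), ?_⟩
  calc ∫ τ in (0 : ℝ)..a, τ * quasimode χ ε τ ^ 2 ≤ ∫ τ in (0 : ℝ)..a, 2 * exp (-τ) := by
        refine intervalIntegral.integral_mono_on ha hint
          ((by fun_prop : Continuous fun τ => 2 * exp (-τ)).intervalIntegrable _ _) fun τ hτ => ?_
        calc τ * quasimode χ ε τ ^ 2 ≤ τ * (2 * exp (-2 * τ)) :=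
              mul_le_mul_of_nonneg_left (sq_quasimode_le hχ01 hε hτ.1) hτ.1
          _ ≤ 2 * exp (-τ) := by linarith [mul_exp_neg_two_mul_le τ]
    _ = 2 * (1 - exp (-a)) := by rw [intervalIntegral.integral_const_mul, integral_exp_neg]
    _ ≤ 2 := by linarith [exp_pos (-a)]

theorem abs_integral_sq_quasimode_mul_weight_sub_one_le (hχc : ContinuousOn χ (Ici 0))
    (hχ01 : ∀ x ∈ Ici (0 : ℝ), χ x ∈ Icc (0 : ℝ) 1) (hχ1 : ∀ x ∈ Icc (0 : ℝ) (1 / 4), χ x = 1)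
    {a : ℝ} (hε : 0 < ε) (haε : a * ε = 1) :
    |(∫ τ in (0 : ℝ)..a, quasimode χ ε τ ^ 2 * (1 - s * τ)) - 1| ≤ 2 * |s| + exp (-a / 4) := by
  have ha : 0 ≤ a := by nlinarith
  have hq : ContinuousOn (fun τ => quasimode χ ε τ ^ 2) (Icc 0 a) :=
    ((continuousOn_quasimode hχc hε.le).pow 2).mono fun _ hx => hx.1
  have hτq : ContinuousOn (fun τ => τ * quasimode χ ε τ ^ 2) (Icc 0 a) := continuousOn_id.mul hq
  have hA := integral_sq_quasimode_mem_Icc hχc hχ01 hχ1 hε haε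
  have hB := integral_mul_sq_quasimode_mem_Icc hχc hχ01 hε.le ha
  have hsplit : ∫ τ in (0 : ℝ)..a, quasimode χ ε τ ^ 2 * (1 - s * τ)
      = (∫ τ in (0 : ℝ)..a, quasimode χ ε τ ^ 2)
        - s * ∫ τ in (0 : ℝ)..a, τ * quasimode χ ε τ ^ 2 := by
    rw [← intervalIntegral.integral_const_mul, ← intervalIntegral.integral_sub
      (hq.intervalIntegrable_of_Icc ha) ((hτq.intervalIntegrable_of_Icc ha).const_mul s)]
    exact intervalIntegral.integral_congr fun τ _ => by ring
  have hexp : exp (-a / 2) ≤ exp (-a / 4) := exp_le_exp.2 (by linarith)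
  rw [hsplit, abs_le]
  constructor <;> nlinarith [neg_abs_le s, le_abs_self s, hA.1, hA.2, hB.1, hB.2]

end Quasimode

theorem quasimode_estimates (ρ : ℝ) (hρ : ρ ∈ Set.Ioo (0 : ℝ) (1 / 2))
    (χ : ℝ → ℝ) (hχ : ContDiffOn ℝ (⊤ : ℕ∞) χ (Set.Ici 0))
    (hχ01 : ∀ x ∈ Set.Ici (0 : ℝ), χ x ∈ Set.Icc (0 : ℝ) 1)
    (hχ1 : ∀ x ∈ Set.Icc (0 : ℝ) (1 / 4), χ x = 1)
    (hχ0 : ∀ x ∈ Set.Ici (1 / 2 : ℝ), χ x = 0) :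
    ∃ C > (0 : ℝ), ∃ h₀ ∈ Set.Ioo (0 : ℝ) 1, ∀ h ∈ Set.Ioo (0 : ℝ) h₀, ∀ β : ℝ,
      |β| * h ^ ((1 : ℝ) / 2 - ρ) < 1 / 3 →
      let f : ℝ → ℝ := fun τ => χ (τ * h ^ ρ) * (Real.sqrt 2 * Real.exp (-τ))
      let f' : ℝ → ℝ := derivWithin f (Set.Ici 0)
      let f'' : ℝ → ℝ := derivWithin f' (Set.Ici 0)
      f' 0 = -f 0 ∧
      f (h ^ (-ρ)) = 0 ∧
      (∫ τ in (0 : ℝ)..(h ^ (-ρ)),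
          |(-f'' τ) + β * h ^ ((1 : ℝ) / 2) * (1 - β * h ^ ((1 : ℝ) / 2) * τ)⁻¹ * f' τ
            + (1 + β * h ^ ((1 : ℝ) / 2)) * f τ| ^ 2 * (1 - β * h ^ ((1 : ℝ) / 2) * τ)) ≤
        C * (β ^ 4 * h ^ 2 + Real.exp (-h ^ (-ρ) / 4)) ∧
      |(∫ τ in (0 : ℝ)..(h ^ (-ρ)), (f τ) ^ 2 * (1 - β * h ^ ((1 : ℝ) / 2) * τ)) - 1| ≤
        C * (|β| * h ^ ((1 : ℝ) / 2) + Real.exp (-h ^ (-ρ) / 4)) := by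
  have hχ2 : ContDiffOn ℝ 2 χ (Ici 0) := hχ.of_le (by norm_cast)
  obtain ⟨M, hM⟩ := exists_abs_derivWithin_le hχ2
  have hK : 1 ≤ (4 * M + 1) ^ 2 := by
    nlinarith [(abs_nonneg _).trans (hM 0 ⟨le_rfl, zero_le_one⟩).1]
  refine ⟨6 * (4 * M + 1) ^ 2, by positivity, 1 / 2, ⟨by norm_num, by norm_num⟩, ?_⟩
  rintro h ⟨hh0, hh⟩ β hβ f f' f''
  have hε : 0 < h ^ ρ := rpow_pos_of_pos hh0 ρ
  have hε1 : h ^ ρ ≤ 1 := rpow_le_one hh0.le (by linarith) hρ.1.le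
  have haε : h ^ (-ρ) * h ^ ρ = 1 := by rw [← rpow_add hh0, neg_add_cancel, rpow_zero]
  have hs : |β * h ^ (1 / 2 : ℝ)| = |β| * h ^ (1 / 2 : ℝ) := by
    rw [abs_mul, abs_of_nonneg (rpow_nonneg hh0.le _)]
  have hsa : |β * h ^ (1 / 2 : ℝ)| * h ^ (-ρ) < 1 / 3 := by
    rwa [hs, mul_assoc, ← rpow_add hh0, ← sub_eq_add_neg]
  have hs4 : (β * h ^ (1 / 2 : ℝ)) ^ 4 = β ^ 4 * h ^ 2 := by
    rw [← sqrt_eq_rpow, mul_pow, show (4 : ℕ) = 2 * 2 from rfl, pow_mul (√h), sq_sqrt hh0.le]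
  have he := exp_pos (-h ^ (-ρ) / 4)
  refine ⟨derivWithin_quasimode_zero (hχ2.differentiableOn (by norm_num)) hχ1 hε.le,
    by simp only [f, haε, hχ0 1 (by norm_num), zero_mul], ?_, ?_⟩
  · refine (integral_sq_quasimode_residual_le hχ2 hχ01 hχ1 hM hε hε1 haε hsa).trans ?_
    rw [hs4]
    nlinarith [mul_nonneg (sub_nonneg.2 hK) (by positivity : 0 ≤ β ^ 4 * h ^ 2)]
  · refine (abs_integral_sq_quasimode_mul_weight_sub_one_le hχ2.continuousOn hχ01 hχ1
      hε haε).trans ?_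
    rw [hs]
    have hx : 0 ≤ |β| * h ^ (1 / 2 : ℝ) := by positivity
    nlinarith [mul_nonneg (sub_nonneg.2 hK) hx, mul_nonneg (sub_nonneg.2 hK) he.le]
end
end
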